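/- arXiv:2602.10726 — 5 statements merged into one kernel-verified Lean document; each statement's English description precedes it below -/
import Mathlib

section
/- Let Σ, Γ be d×d positive semidefinite real matrices and ε̃ > 0. Define G_Σ^Γ := 2Σ((Σ² + ε̃² I)^{1/2} + ε̃ I)^{-1} − 2Γ^{1/2}((Γ^{1/2} Σ Γ^{1/2} + ε̃² I)^{1/2} + ε̃ I)^{-1} Γ^{1/2}. Then every eigenvalue of G_Σ^Γ lies in the interval [−λ_max(Γ)/ε̃, 2]. -/
/-!
Since `S₁ ≥ 0` squares to `A² + ε²`, uniqueness of nonnegative square roots makes it the function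
`√(x² + ε²)` of `A` in the continuous functional calculus, so `A (S₁ + ε)⁻¹` is the function
`x / (√(x² + ε²) + ε)` of `A`, which takes values in `[0, 1]` on the spectrum `x ≥ 0`. Likewise
`(S₂ + ε)⁻¹` is the function `(√(y + ε²) + ε)⁻¹ ∈ [0, (2ε)⁻¹]` of `R A R ≥ 0`, so conjugating by `R`
gives `0 ≤ R (S₂ + ε)⁻¹ R ≤ B / (2ε) ≤ λ_max(B) / (2ε)`. Hence the self-adjoint matrix `G` satisfies
`-λ_max(B) / ε ≤ G ≤ 2` in the Loewner order, which confines its spectrum to that interval.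
-/

open scoped MatrixOrder

section CFCBounds

variable {𝒜 : Type*} [Ring 𝒜] [StarRing 𝒜] [TopologicalSpace 𝒜] [Algebra ℝ 𝒜] [PartialOrder 𝒜]
  [StarOrderedRing 𝒜] [ContinuousFunctionalCalculus ℝ 𝒜 IsSelfAdjoint] [NonnegSpectrumClass ℝ 𝒜]

lemma spectrum_subset_Icc_of_le {m : 𝒜} {lo hi : ℝ} (hm : IsSelfAdjoint m)
    (hlo : algebraMap ℝ 𝒜 lo ≤ m) (hhi : m ≤ algebraMap ℝ 𝒜 hi) : spectrum ℝ m ⊆ Set.Icc lo hi :=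
  fun _ hx => ⟨(algebraMap_le_iff_le_spectrum hm).1 hlo _ hx,
    (le_algebraMap_iff_spectrum_le hm).1 hhi _ hx⟩

variable [IsTopologicalRing 𝒜] [T2Space 𝒜]

lemma eq_cfc_sqrt_of_mul_self_eq {a s : 𝒜} {g : ℝ → ℝ} (hs : 0 ≤ s) (h : s * s = cfc g a)
    (hg : ∀ x ∈ spectrum ℝ a, 0 ≤ g x) (hgc : ContinuousOn g (spectrum ℝ a)) :
    s = cfc (fun x => √(g x)) a := by
  have hsq : cfc (fun x => √(g x)) a * cfc (fun x => √(g x)) a = cfc g a := by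
    rw [← cfc_mul ..]
    exact cfc_congr fun x hx => Real.mul_self_sqrt (hg x hx)
  rw [← CFC.sqrt_mul_self s, h, ← hsq,
    CFC.sqrt_mul_self _ (cfc_nonneg fun x _ => Real.sqrt_nonneg _)]

lemma ringInverse_add_algebraMap_eq_cfc_sqrt {a s : 𝒜} {g : ℝ → ℝ} {ε : ℝ} (hε : 0 < ε)
    (hs : 0 ≤ s) (h : s * s = cfc g a) (hg : ∀ x ∈ spectrum ℝ a, 0 ≤ g x)
    (hgc : ContinuousOn g (spectrum ℝ a)) (ha : IsSelfAdjoint a) :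
    Ring.inverse (s + algebraMap ℝ 𝒜 ε) = cfc (fun x => (√(g x) + ε)⁻¹) a := by
  rw [eq_cfc_sqrt_of_mul_self_eq hs h hg hgc, ← cfc_add_const .., cfc_inv ..]
  intro x _
  positivity

lemma mul_ringInverse_add_algebraMap_mem_Icc {a s : 𝒜} {ε : ℝ} (hε : 0 < ε) (ha : 0 ≤ a)
    (hs : 0 ≤ s) (h : s * s = a * a + algebraMap ℝ 𝒜 (ε ^ 2)) :
    a * Ring.inverse (s + algebraMap ℝ 𝒜 ε) ∈ Set.Icc 0 1 := by
  have hspec := spectrum_nonneg_of_nonneg (𝕜 := ℝ) ha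
  have hsq : a * a + algebraMap ℝ 𝒜 (ε ^ 2) = cfc (fun x => x ^ 2 + ε ^ 2) a := by
    rw [cfc_add_const .., cfc_pow .., cfc_id' .., sq a]
  have hcont : Continuous fun x : ℝ => (√(x ^ 2 + ε ^ 2) + ε)⁻¹ :=
    .inv₀ (by fun_prop) fun x => by positivity
  rw [hsq] at h
  rw [ringInverse_add_algebraMap_eq_cfc_sqrt hε hs h (fun x _ => by positivity) (by fun_prop)
    (.of_nonneg ha)]
  nth_rw 1 [← cfc_id' ℝ a]
  rw [← cfc_mul (fun x => x) _ a (hg := hcont.continuousOn)]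
  constructor
  · exact cfc_nonneg fun x hx => mul_nonneg (hspec hx) (by positivity)
  · refine cfc_le_one _ _ fun x hx => ?_
    have : x ≤ √(x ^ 2 + ε ^ 2) := Real.le_sqrt_of_sq_le (by nlinarith)
    rw [← div_eq_mul_inv, div_le_one (by positivity)]
    linarith

lemma ringInverse_add_algebraMap_mem_Icc {a s : 𝒜} {ε : ℝ} (hε : 0 < ε) (ha : 0 ≤ a) (hs : 0 ≤ s)
    (h : s * s = a + algebraMap ℝ 𝒜 (ε ^ 2)) :
    Ring.inverse (s + algebraMap ℝ 𝒜 ε) ∈ Set.Icc 0 (algebraMap ℝ 𝒜 (2 * ε)⁻¹) := by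
  have hspec := spectrum_nonneg_of_nonneg (𝕜 := ℝ) ha
  rw [← cfc_id' ℝ a, ← cfc_add_const ..] at h
  rw [ringInverse_add_algebraMap_eq_cfc_sqrt hε hs h
    (fun x hx => by have := hspec hx; positivity) (by fun_prop) (.of_nonneg ha)]
  constructor
  · exact cfc_nonneg fun x hx => by positivity
  · refine cfc_le_algebraMap _ _ _ (fun x hx => ?_) ?_
    · have : ε ≤ √(x + ε ^ 2) := Real.le_sqrt_of_sq_le (by linarith [hspec hx])
      gcongr
      linarith
    · exact ContinuousOn.inv₀ (by fun_prop) fun x hx => by positivity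

lemma conjugate_ringInverse_add_algebraMap_mem_Icc {a r s : 𝒜} {ε : ℝ} (hε : 0 < ε)
    (ha : 0 ≤ a) (hr : IsSelfAdjoint r) (hs : 0 ≤ s)
    (h : s * s = r * a * r + algebraMap ℝ 𝒜 (ε ^ 2)) :
    r * Ring.inverse (s + algebraMap ℝ 𝒜 ε) * r ∈ Set.Icc 0 ((2 * ε)⁻¹ • (r * r)) := by
  obtain ⟨h0, h1⟩ := ringInverse_add_algebraMap_mem_Icc hε (hr.conjugate_nonneg ha) hs h
  refine ⟨hr.conjugate_nonneg h0, (hr.conjugate_le_conjugate h1).trans_eq ?_⟩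
  rw [Algebra.algebraMap_eq_smul_one, mul_smul_comm, mul_one, smul_mul_assoc]

end CFCBounds

lemma Matrix.IsHermitian.le_algebraMap_iSup_eigenvalues {n : Type*} [Fintype n] [DecidableEq n]
    {B : Matrix n n ℝ} (hB : B.IsHermitian) : B ≤ algebraMap ℝ _ (⨆ i, hB.eigenvalues i) := by
  rw [le_algebraMap_iff_spectrum_le hB, hB.spectrum_real_eq_range_eigenvalues]
  rintro _ ⟨i, rfl⟩
  exact le_ciSup (Set.finite_range _).bddAbove i

/-- eigenvalues of
G_Σ^Γ = 2Σ((Σ²+ε̃²I)^{1/2}+ε̃I)⁻¹ − 2Γ^{1/2}((Γ^{1/2}ΣΓ^{1/2}+ε̃²I)^{1/2}+ε̃I)⁻¹Γ^{1/2}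
lie in [−λ_max(Γ)/ε̃, 2]. -/
theorem stmt2 (d : ℕ) (A B : Matrix (Fin d) (Fin d) ℝ)
    (hA : A.PosSemidef) (hB : B.PosSemidef) (ε : ℝ) (hε : 0 < ε)
    (R : Matrix (Fin d) (Fin d) ℝ) (hR : R.PosSemidef) (hR2 : R * R = B)
    (S₁ : Matrix (Fin d) (Fin d) ℝ) (hS₁ : S₁.PosSemidef)
    (hS₁2 : S₁ * S₁ = A * A + (ε ^ 2) • (1 : Matrix (Fin d) (Fin d) ℝ))
    (S₂ : Matrix (Fin d) (Fin d) ℝ) (hS₂ : S₂.PosSemidef)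
    (hS₂2 : S₂ * S₂ = R * A * R + (ε ^ 2) • (1 : Matrix (Fin d) (Fin d) ℝ))
    (μ : ℝ)
    (hμ : μ ∈ spectrum ℝ
        ((2 : ℝ) • (A * (S₁ + ε • (1 : Matrix (Fin d) (Fin d) ℝ))⁻¹)
          - (2 : ℝ) • (R * (S₂ + ε • (1 : Matrix (Fin d) (Fin d) ℝ))⁻¹ * R))) :
    μ ∈ Set.Icc (-(⨆ i, hB.1.eigenvalues i) / ε) 2 := by
  simp only [← Algebra.algebraMap_eq_smul_one, Matrix.nonsing_inv_eq_ringInverse]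
    at hS₁2 hS₂2 hμ
  set c := ⨆ i, hB.1.eigenvalues i
  obtain ⟨hP0, hP1⟩ := mul_ringInverse_add_algebraMap_mem_Icc hε hA.nonneg hS₁.nonneg hS₁2
  obtain ⟨hQ0, hQ1⟩ :=
    conjugate_ringInverse_add_algebraMap_mem_Icc hε hA.nonneg hR.1 hS₂.nonneg hS₂2
  have hQc : R * Ring.inverse (S₂ + algebraMap ℝ _ ε) * R ≤ (2 * ε)⁻¹ • algebraMap ℝ _ c :=
    hQ1.trans (hR2 ▸ by gcongr; exact hB.1.le_algebraMap_iSup_eigenvalues)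
  refine spectrum_subset_Icc_of_le ?_ ?_ ?_ hμ
  · exact ((IsSelfAdjoint.all (2 : ℝ)).smul (.of_nonneg hP0)).sub
      ((IsSelfAdjoint.all (2 : ℝ)).smul (.of_nonneg hQ0))
  · calc algebraMap ℝ _ (-c / ε)
        = (2 : ℝ) • (0 : Matrix (Fin d) (Fin d) ℝ) - (2 : ℝ) • ((2 * ε)⁻¹ • algebraMap ℝ _ c) := by
          simp only [Algebra.algebraMap_eq_smul_one, smul_zero, zero_sub, smul_smul, ← neg_smul]
          congr 1
          field_simp
      _ ≤ _ := by gcongr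
  · calc _ ≤ (2 : ℝ) • (1 : Matrix (Fin d) (Fin d) ℝ) - (2 : ℝ) • 0 := by gcongr
      _ = algebraMap ℝ _ 2 := by simp [Algebra.algebraMap_eq_smul_one]
end

section
/- Let λ* ≥ 0 and ε̃ > 0, and let λ > 0. If λ*·√(λ² + ε̃²) − λ·√(λ*·λ + ε̃²) + ε̃(λ* − λ) = 0, then λ = λ*. -/
/-- scalar critical-point identity forces λ = λ*. -/
theorem stmt3 (lstar ε l : ℝ) (hlstar : 0 ≤ lstar) (hε : 0 < ε) (hl : 0 < l)
    (h : lstar * Real.sqrt (l ^ 2 + ε ^ 2) - l * Real.sqrt (lstar * l + ε ^ 2)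
        + ε * (lstar - l) = 0) :
    l = lstar := by
  set A := Real.sqrt (l ^ 2 + ε ^ 2) with hA
  set B := Real.sqrt (lstar * l + ε ^ 2) with hB
  have hA0 : 0 ≤ A := Real.sqrt_nonneg _
  have hB0 : 0 ≤ B := Real.sqrt_nonneg _
  have hA2 : A ^ 2 = l ^ 2 + ε ^ 2 := Real.sq_sqrt (by positivity)
  have hB2 : B ^ 2 = lstar * l + ε ^ 2 := Real.sq_sqrt (by positivity)
  have key : lstar * (A + ε) = l * (B + ε) := by linarith [h]
  have hBe : 0 < B + ε := by linarith
  have hAe : 0 < A + ε := by linarith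
  have hls : 0 < lstar := by
    rcases lt_or_eq_of_le hlstar with h1 | h1
    · exact h1
    · exfalso; have := key; nlinarith
  have hAB : A = B := by
    have h1 : (A - ε) * (A + ε) = l ^ 2 := by nlinarith
    have h2 : (B - ε) * (B + ε) = lstar * l := by nlinarith
    have h3 : l * (B + ε) * (A - ε) = l * (B + ε) * (B - ε) := by nlinarith
    have := mul_left_cancel₀ (by positivity : l * (B + ε) ≠ 0) h3
    linarith
  have : lstar * (A + ε) = l * (A + ε) := by rw [hAB] at key ⊢; exact key
  have := mul_right_cancel₀ (ne_of_gt hAe) this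
  linarith
end

section
/- Fix λ* > 0, ε̃ > 0, and λ⁰ > 0. Let λ : [0,∞) → ℝ solve the ODE λ'(t) = 4 λ(t) ( λ*/(√(λ* λ(t) + ε̃²) + ε̃) − λ(t)/(√(λ(t)² + ε̃²) + ε̃) ) with λ(0) = λ⁰. Then for all t ≥ 0, |λ(t) − λ*| ≤ exp(−C t) |λ⁰ − λ*|, where C = 4 ε̃ min(λ*, λ⁰) / ((√(λ* M + ε̃²) + ε̃)(√(M² + ε̃²) + ε̃)) and M = max(λ⁰, λ*). -/
/-! For `x ≥ 0` the two fractions rationalise, and the vector field factors as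
`F x = r x * (λ* - x)` with `r x = 4x / (√(λ* x + ε²) + √(x² + ε²)) ≥ 0`; it is also `x * g x` with
`g` continuous. An integrating factor solves both linear equations explicitly:
`λ t = λ⁰ exp (∫₀ᵗ g (λ s))` is positive, and then `λ t - λ* = (λ⁰ - λ*) exp (-∫₀ᵗ r (λ s))`.
The second formula keeps `λ t` between `λ⁰` and `λ*`, where `r ≥ C`, so the exponent is at most `-C t`. -/

open Real Set

theorem eq_mul_exp_integral_of_hasDerivAt_mul {f a : ℝ → ℝ} {t₀ : ℝ}
    (ha : ContinuousOn a (Ici t₀)) (hf : ∀ t ≥ t₀, HasDerivAt f (a t * f t) t) :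
    ∀ t ≥ t₀, f t = f t₀ * exp (∫ s in t₀..t, a s) := by
  intro t ht
  set G : ℝ → ℝ := fun t => ∫ s in t₀..t, a s
  have hint : ∀ t ≥ t₀, IntervalIntegrable a MeasureTheory.volume t₀ t := fun t ht =>
    (ha.mono (by rw [uIcc_of_le ht]; exact Icc_subset_Ici_self)).intervalIntegrable
  have hG : ∀ x ≥ t₀, HasDerivWithinAt G (a x) (Ici x) x := fun x hx =>
    intervalIntegral.integral_hasDerivWithinAt_right (hint x hx)
      ((ha.mono (Ioi_subset_Ici_iff.2 hx)).stronglyMeasurableAtFilter_nhdsWithin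
        measurableSet_Ioi x)
      ((ha x hx).mono (Ioi_subset_Ici_iff.2 hx))
  have hGcont : ContinuousOn G (Icc t₀ t) := by
    simpa [uIcc_of_le ht] using intervalIntegral.continuousOn_primitive_interval' (hint t ht)
      left_mem_uIcc
  have hconst := constant_of_has_deriv_right_zero (f := fun x => f x * exp (-G x))
    (fun x hx => ((hf x hx.1).continuousAt.continuousWithinAt).mul
      (hGcont x hx).neg.rexp)
    (fun x hx => ((hf x hx.1).hasDerivWithinAt.mul (hG x hx.1).neg.exp).congr_deriv
      (by ring))
    t ⟨ht, le_rfl⟩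
  simp only [G, intervalIntegral.integral_same, neg_zero, exp_zero, mul_one] at hconst
  rw [← hconst, mul_assoc, ← exp_add, neg_add_cancel, exp_zero, mul_one]

noncomputable def eigenvalueField (lstar ε x : ℝ) : ℝ :=
  4 * x * (lstar / (√(lstar * x + ε ^ 2) + ε) - x / (√(x ^ 2 + ε ^ 2) + ε))

noncomputable def eigenvalueRate (lstar ε x : ℝ) : ℝ :=
  4 * x / (√(lstar * x + ε ^ 2) + √(x ^ 2 + ε ^ 2))

section
variable {lstar ε x : ℝ}

theorem eigenvalueField_eq_rate_mul (hlstar : 0 ≤ lstar) (hε : 0 < ε) (hx : 0 ≤ x) :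
    eigenvalueField lstar ε x = eigenvalueRate lstar ε x * (lstar - x) := by
  have hA := sq_sqrt (show 0 ≤ lstar * x + ε ^ 2 by positivity)
  have hB := sq_sqrt (show 0 ≤ x ^ 2 + ε ^ 2 by positivity)
  have hB0 : 0 < √(x ^ 2 + ε ^ 2) := sqrt_pos.2 (by positivity)
  have hA0 : 0 ≤ √(lstar * x + ε ^ 2) := sqrt_nonneg _
  unfold eigenvalueField eigenvalueRate
  set A := √(lstar * x + ε ^ 2)
  set B := √(x ^ 2 + ε ^ 2)
  field_simp
  linear_combination x * lstar * hB - x ^ 2 * hA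

theorem continuous_eigenvalueRate (hε : 0 < ε) : Continuous (eigenvalueRate lstar ε) := by
  refine Continuous.div (by fun_prop) (by fun_prop) fun x => ?_
  have : 0 < √(x ^ 2 + ε ^ 2) := sqrt_pos.2 (by positivity)
  positivity

theorem eigenvalueRate_nonneg (hx : 0 ≤ x) : 0 ≤ eigenvalueRate lstar ε x := by
  unfold eigenvalueRate
  positivity

theorem le_eigenvalueRate {m M : ℝ} (hlstar : 0 ≤ lstar) (hε : 0 < ε) (hm : 0 ≤ m)
    (hmx : m ≤ x) (hxM : x ≤ M) :
    4 * ε * m / ((√(lstar * M + ε ^ 2) + ε) * (√(M ^ 2 + ε ^ 2) + ε)) ≤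
      eigenvalueRate lstar ε x := by
  have hP := sqrt_nonneg (lstar * M + ε ^ 2)
  have hQ : 0 < √(M ^ 2 + ε ^ 2) := sqrt_pos.2 (by positivity)
  have hB : 0 < √(x ^ 2 + ε ^ 2) := sqrt_pos.2 (by positivity)
  calc 4 * ε * m / ((√(lstar * M + ε ^ 2) + ε) * (√(M ^ 2 + ε ^ 2) + ε))
      -- `(P + ε) * (Q + ε) ≥ ε * (P + Q)`, with `P`, `Q` the two square roots
      ≤ 4 * m / (√(lstar * M + ε ^ 2) + √(M ^ 2 + ε ^ 2)) := by
        rw [div_le_div_iff₀ (by positivity) (by positivity)]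
        nlinarith [mul_nonneg (mul_nonneg hm hP) hQ.le, mul_nonneg hm (sq_nonneg ε)]
    _ ≤ eigenvalueRate lstar ε x := by
        unfold eigenvalueRate
        have hx : 0 ≤ x := hm.trans hmx
        gcongr
end

section
variable {lstar ε : ℝ} {l : ℝ → ℝ}

theorem pos_of_hasDerivAt_eigenvalueField (hε : 0 < ε)
    (hode : ∀ t ≥ (0 : ℝ), HasDerivAt l (eigenvalueField lstar ε (l t)) t) (h0 : 0 < l 0) :
    ∀ t ≥ (0 : ℝ), 0 < l t := by
  set g : ℝ → ℝ := fun x => 4 * (lstar / (√(lstar * x + ε ^ 2) + ε) - x / (√(x ^ 2 + ε ^ 2) + ε))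
  have hg : Continuous g := by
    refine continuous_const.mul (Continuous.sub ?_ ?_)
    · exact continuous_const.div (by fun_prop) fun x => by positivity
    · exact continuous_id.div (by fun_prop) fun x => by positivity
  intro t ht
  rw [eq_mul_exp_integral_of_hasDerivAt_mul (a := g ∘ l)
    (hg.comp_continuousOn (HasDerivAt.continuousOn (s := Ici 0) hode))
    (fun t ht => (hode t ht).congr_deriv (by simp only [eigenvalueField, g, Function.comp]; ring))
    t ht]
  positivity

theorem sub_eq_mul_exp_of_hasDerivAt_eigenvalueField (hlstar : 0 ≤ lstar) (hε : 0 < ε)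
    (hode : ∀ t ≥ (0 : ℝ), HasDerivAt l (eigenvalueField lstar ε (l t)) t) (h0 : 0 < l 0) :
    ∀ t ≥ (0 : ℝ), l t - lstar =
      (l 0 - lstar) * exp (-∫ s in 0..t, eigenvalueRate lstar ε (l s)) := by
  have hpos := pos_of_hasDerivAt_eigenvalueField hε hode h0
  intro t ht
  rw [← intervalIntegral.integral_neg]
  refine eq_mul_exp_integral_of_hasDerivAt_mul (f := fun t => l t - lstar)
    (a := fun s => -eigenvalueRate lstar ε (l s))
    ((continuous_eigenvalueRate hε).comp_continuousOn
      (HasDerivAt.continuousOn (s := Ici 0) hode)).neg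
    (fun t ht => ((hode t ht).sub_const lstar).congr_deriv ?_) t ht
  rw [eigenvalueField_eq_rate_mul hlstar hε (hpos t ht).le]
  ring

theorem mem_Icc_of_hasDerivAt_eigenvalueField (hlstar : 0 ≤ lstar) (hε : 0 < ε)
    (hode : ∀ t ≥ (0 : ℝ), HasDerivAt l (eigenvalueField lstar ε (l t)) t) (h0 : 0 < l 0) :
    ∀ t ≥ (0 : ℝ), l t ∈ Icc (min lstar (l 0)) (max (l 0) lstar) := by
  have hpos := pos_of_hasDerivAt_eigenvalueField hε hode h0
  intro t ht
  have hdecay : exp (-∫ s in 0..t, eigenvalueRate lstar ε (l s)) ≤ 1 :=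
    exp_le_one_iff.2 (neg_nonpos.2 (intervalIntegral.integral_nonneg ht
      fun s hs => eigenvalueRate_nonneg (hpos s hs.1).le))
  have hsub := sub_eq_mul_exp_of_hasDerivAt_eigenvalueField hlstar hε hode h0 t ht
  have hexp := exp_pos (-∫ s in 0..t, eigenvalueRate lstar ε (l s))
  rcases le_total lstar (l 0) with h | h
  · rw [min_eq_left h, max_eq_left h]
    constructor <;> nlinarith
  · rw [min_eq_right h, max_eq_right h]
    constructor <;> nlinarith

theorem mul_le_integral_eigenvalueRate (hlstar : 0 ≤ lstar) (hε : 0 < ε)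
    (hode : ∀ t ≥ (0 : ℝ), HasDerivAt l (eigenvalueField lstar ε (l t)) t) (h0 : 0 < l 0) :
    ∀ t ≥ (0 : ℝ), 4 * ε * min lstar (l 0) / ((√(lstar * max (l 0) lstar + ε ^ 2) + ε) *
      (√(max (l 0) lstar ^ 2 + ε ^ 2) + ε)) * t ≤
      ∫ s in 0..t, eigenvalueRate lstar ε (l s) := by
  intro t ht
  set C := 4 * ε * min lstar (l 0) / ((√(lstar * max (l 0) lstar + ε ^ 2) + ε) *
    (√(max (l 0) lstar ^ 2 + ε ^ 2) + ε))
  calc C * t = ∫ _ in 0..t, C := by simp [mul_comm]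
    _ ≤ ∫ s in 0..t, eigenvalueRate lstar ε (l s) := by
      refine intervalIntegral.integral_mono_on ht intervalIntegrable_const
        (((continuous_eigenvalueRate hε).comp_continuousOn
          (HasDerivAt.continuousOn (s := Ici 0) hode)).mono ?_).intervalIntegrable
        fun s hs => ?_
      · simp [uIcc_of_le ht, Icc_subset_Ici_self]
      · obtain ⟨hm, hM⟩ := mem_Icc_of_hasDerivAt_eigenvalueField hlstar hε hode h0 s hs.1
        exact le_eigenvalueRate hlstar hε (le_min hlstar h0.le) hm hM
end

/-- exponential convergence rate for the eigenvalue ODE with λ* > 0. -/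
theorem stmt8 (lstar ε l0 : ℝ) (hlstar : 0 < lstar) (hε : 0 < ε) (hl0 : 0 < l0)
    (l : ℝ → ℝ)
    (hode : ∀ t ≥ (0 : ℝ), HasDerivAt l
      (4 * l t * (lstar / (Real.sqrt (lstar * l t + ε ^ 2) + ε)
        - l t / (Real.sqrt ((l t) ^ 2 + ε ^ 2) + ε))) t)
    (hinit : l 0 = l0) :
    ∀ t ≥ (0 : ℝ),
      |l t - lstar| ≤
        Real.exp (-(4 * ε * min lstar l0 /
          ((Real.sqrt (lstar * max l0 lstar + ε ^ 2) + ε) *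
            (Real.sqrt ((max l0 lstar) ^ 2 + ε ^ 2) + ε))) * t) * |l0 - lstar| := by
  subst hinit
  intro t ht
  rw [sub_eq_mul_exp_of_hasDerivAt_eigenvalueField hlstar.le hε hode hl0 t ht, abs_mul,
    abs_of_pos (exp_pos _), mul_comm]
  gcongr
  linarith [mul_le_integral_eigenvalueRate hlstar.le hε hode hl0 t ht]
end

section
/- Fix ε̃ > 0 and λ⁰ > 0. Let λ : [0,∞) → ℝ solve λ'(t) = −4 λ(t)² / (√(λ(t)² + ε̃²) + ε̃) with λ(0) = λ⁰. Then for all t ≥ 0, 0 ≤ λ(t) ≤ λ⁰ / (1 + λ⁰ C t), where C = 4/(√((λ⁰)² + ε̃²) + ε̃). -/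
/-!
The right-hand side equals `-4 (√(λ² + ε̃²) - ε̃)`, so it is `4`-Lipschitz, nonpositive and
vanishes at `0`. By uniqueness of solutions a trajectory starting at `λ⁰ > 0` never reaches `0`,
hence stays positive, and it decreases, so `λ ≤ λ⁰`. Then
`(1/λ)' = 4 / (√(λ² + ε̃²) + ε̃) ≥ C`, and integrating gives `1/λ(t) ≥ 1/λ⁰ + C t`.
-/

open Set

theorem abs_sqrt_sq_add_sub_sqrt_sq_add_le {c : ℝ} (hc : 0 ≤ c) (x y : ℝ) :
    |√(x ^ 2 + c) - √(y ^ 2 + c)| ≤ |x - y| := by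
  have ha := Real.sq_sqrt (by positivity : 0 ≤ x ^ 2 + c)
  have hb := Real.sq_sqrt (by positivity : 0 ≤ y ^ 2 + c)
  -- Cauchy–Schwarz: `(x y + c)² ≤ (x² + c) (y² + c)`.
  have hab : x * y + c ≤ √(x ^ 2 + c) * √(y ^ 2 + c) := by
    rw [← Real.sqrt_mul (by positivity)]
    exact Real.le_sqrt_of_sq_le (by nlinarith [mul_nonneg hc (sq_nonneg (x - y))])
  rw [← sq_le_sq]
  nlinarith

noncomputable def eigenvalueFlowField (ε x : ℝ) : ℝ := -(4 * x ^ 2 / (√(x ^ 2 + ε ^ 2) + ε))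

namespace eigenvalueFlowField

variable {ε : ℝ}

theorem eq_neg_mul_sqrt_sub (hε : 0 < ε) (x : ℝ) :
    eigenvalueFlowField ε x = -4 * (√(x ^ 2 + ε ^ 2) - ε) := by
  have hs := Real.sq_sqrt (by positivity : 0 ≤ x ^ 2 + ε ^ 2)
  have hpos : 0 < √(x ^ 2 + ε ^ 2) + ε := by positivity
  rw [eigenvalueFlowField, neg_mul, neg_inj, div_eq_iff hpos.ne']
  linear_combination (-4) * hs

theorem zero : eigenvalueFlowField ε 0 = 0 := by simp [eigenvalueFlowField]

theorem lipschitzWith (hε : 0 < ε) : LipschitzWith 4 (eigenvalueFlowField ε) := by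
  refine LipschitzWith.of_dist_le_mul fun x y => ?_
  rw [Real.dist_eq, Real.dist_eq, eq_neg_mul_sqrt_sub hε, eq_neg_mul_sqrt_sub hε,
    ← mul_sub, sub_sub_sub_cancel_right, abs_mul]
  norm_num
  exact abs_sqrt_sq_add_sub_sqrt_sq_add_le (sq_nonneg ε) x y

theorem nonpos (hε : 0 ≤ ε) (x : ℝ) : eigenvalueFlowField ε x ≤ 0 :=
  neg_nonpos.mpr (by positivity)

theorem le_neg_mul_sq (hε : 0 < ε) {x y : ℝ} (hxy : x ^ 2 ≤ y ^ 2) :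
    eigenvalueFlowField ε x ≤ -(4 / (√(y ^ 2 + ε ^ 2) + ε)) * x ^ 2 := by
  rw [eigenvalueFlowField, neg_mul, neg_le_neg_iff, div_mul_eq_mul_div, mul_comm]
  gcongr

end eigenvalueFlowField

section AutonomousODE

theorem eq_zero_left_of_hasDerivAt_of_lipschitzWith {E : Type*} [NormedAddCommGroup E]
    [NormedSpace ℝ E] {F : E → E} {K : NNReal} (hF : LipschitzWith K F) (hF0 : F 0 = 0)
    {l : ℝ → E} {s t : ℝ} (hst : s ≤ t) (hl : ∀ r ∈ Icc s t, HasDerivAt l (F (l r)) r)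
    (hlt : l t = 0) : l s = 0 :=
  ODE_solution_unique_of_mem_Icc_left (v := fun _ => F) (s := fun _ => univ) (g := fun _ => 0)
    (fun _ _ => hF.lipschitzOnWith) (HasDerivAt.continuousOn hl)
    (fun r hr => (hl r (Ioc_subset_Icc_self hr)).hasDerivWithinAt) (fun _ _ => trivial)
    continuousOn_const (fun r _ => by simpa [hF0] using hasDerivWithinAt_const r _ (0 : E))
    (fun _ _ => trivial) hlt ⟨le_rfl, hst⟩

variable {F : ℝ → ℝ} {l : ℝ → ℝ}

theorem pos_of_hasDerivAt_of_lipschitzWith {K : NNReal} (hF : LipschitzWith K F) (hF0 : F 0 = 0)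
    (hl : ∀ t ≥ 0, HasDerivAt l (F (l t)) t) (hl0 : 0 < l 0) {t : ℝ} (ht : 0 ≤ t) :
    0 < l t := by
  by_contra! hlt
  obtain ⟨s, hs, hls⟩ := intermediate_value_Icc' ht
    (HasDerivAt.continuousOn fun r hr => hl r hr.1) ⟨hlt, hl0.le⟩
  exact hl0.ne' (eq_zero_left_of_hasDerivAt_of_lipschitzWith hF hF0 hs.1
    (fun r hr => hl r hr.1) hls)

theorem antitoneOn_of_hasDerivAt_of_nonpos (hF : ∀ x, F x ≤ 0)
    (hl : ∀ t ≥ 0, HasDerivAt l (F (l t)) t) : AntitoneOn l (Ici 0) := by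
  refine antitoneOn_of_hasDerivWithinAt_nonpos (convex_Ici 0)
    (HasDerivAt.continuousOn fun t ht => hl t ht) (fun t ht => ?_) (fun t _ => hF (l t))
  rw [interior_Ici] at ht
  exact (hl t (le_of_lt ht)).hasDerivWithinAt

end AutonomousODE

theorem le_div_one_add_mul_of_hasDerivAt_le_neg_mul_sq {l l' : ℝ → ℝ} {C : ℝ} (hC : 0 ≤ C)
    (hl : ∀ t ≥ 0, HasDerivAt l (l' t) t) (hpos : ∀ t ≥ 0, 0 < l t)
    (hl' : ∀ t ≥ 0, l' t ≤ -C * l t ^ 2) {t : ℝ} (ht : 0 ≤ t) :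
    l t ≤ l 0 / (1 + l 0 * C * t) := by
  have hinv : ∀ r ≥ 0, HasDerivAt (fun r => (l r)⁻¹) (-l' r / l r ^ 2) r :=
    fun r hr => (hl r hr).inv (hpos r hr).ne'
  have hgrowth : C * (t - 0) ≤ (l t)⁻¹ - (l 0)⁻¹ := by
    refine (convex_Ici 0).mul_sub_le_image_sub_of_le_deriv
      (HasDerivAt.continuousOn hinv)
      (fun r hr => (hinv r (interior_subset hr)).differentiableAt.differentiableWithinAt)
      (fun r hr => ?_) 0 self_mem_Ici t ht ht
    have hr : 0 ≤ r := interior_subset hr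
    rw [(hinv r hr).deriv, le_div_iff₀ (pow_pos (hpos r hr) 2)]
    linarith [hl' r hr]
  have h0 := hpos 0 le_rfl
  calc l t = ((l t)⁻¹)⁻¹ := (inv_inv _).symm
    _ ≤ ((l 0)⁻¹ + C * t)⁻¹ := inv_anti₀ (by positivity) (by linarith)
    _ = l 0 / (1 + l 0 * C * t) := by field_simp

/-- sublinear convergence rate for the eigenvalue ODE with zero target. -/
theorem stmt9 (ε l0 : ℝ) (hε : 0 < ε) (hl0 : 0 < l0)
    (l : ℝ → ℝ)
    (hode : ∀ t ≥ (0 : ℝ), HasDerivAt l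
      (-(4 * (l t) ^ 2 / (Real.sqrt ((l t) ^ 2 + ε ^ 2) + ε))) t)
    (hinit : l 0 = l0) :
    ∀ t ≥ (0 : ℝ),
      0 ≤ l t ∧ l t ≤ l0 / (1 + l0 * (4 / (Real.sqrt (l0 ^ 2 + ε ^ 2) + ε)) * t) := by
  have hflow : ∀ t ≥ (0 : ℝ), HasDerivAt l (eigenvalueFlowField ε (l t)) t := hode
  have hpos : ∀ t ≥ (0 : ℝ), 0 < l t := fun _ ht =>
    pos_of_hasDerivAt_of_lipschitzWith (eigenvalueFlowField.lipschitzWith hε)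
      eigenvalueFlowField.zero hflow (hinit ▸ hl0) ht
  have hle : ∀ t ≥ (0 : ℝ), l t ≤ l0 := fun t ht => hinit ▸
    antitoneOn_of_hasDerivAt_of_nonpos (eigenvalueFlowField.nonpos hε.le) hflow
      self_mem_Ici ht ht
  intro t ht
  refine ⟨(hpos t ht).le, ?_⟩
  have hrate := le_div_one_add_mul_of_hasDerivAt_le_neg_mul_sq (by positivity) hflow hpos
    (fun r hr => eigenvalueFlowField.le_neg_mul_sq hε
      (pow_le_pow_left₀ (hpos r hr).le (hle r hr) 2)) ht
  rwa [hinit] at hrate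
end

section
/- Let F : S⁺_d → ℝ be C¹ with symmetric gradient ∇F, and suppose Σ : [0,∞) → S⁺_d and X : [0,∞) → ℝ^{d×d} satisfy X'(t) = −2 X(t) ∇F(X(t)ᵀ X(t)) with X(0)ᵀ X(0) = Σ(0), and Σ'(t) = −2(∇F(Σ(t)) Σ(t) + Σ(t) ∇F(Σ(t))), with the latter ODE having unique solutions. Then X(t)ᵀ X(t) = Σ(t) for all t ≥ 0. -/
open Matrix

/-! If `X' = -2 X G(XᵀX)` with `G(XᵀX)` symmetric, the product rule gives
`(XᵀX)' = X'ᵀX + XᵀX' = -2 (G(XᵀX) XᵀX + XᵀX G(XᵀX))`, so `t ↦ XᵀX` solves the covariance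
ODE from the same initial value as `Σ`; uniqueness of its solutions forces `XᵀX = Σ`. -/

section EntrywiseDerivative

variable {m n p : Type*} [Fintype n]

theorem hasDerivAt_mul_apply {A : ℝ → Matrix m n ℝ} {B : ℝ → Matrix n p ℝ}
    {A' : Matrix m n ℝ} {B' : Matrix n p ℝ} {t : ℝ}
    (hA : ∀ i j, HasDerivAt (fun s => A s i j) (A' i j) t)
    (hB : ∀ i j, HasDerivAt (fun s => B s i j) (B' i j) t) (i : m) (k : p) :
    HasDerivAt (fun s => (A s * B s) i k) ((A' * B t + A t * B') i k) t := by
  simpa only [mul_apply, Matrix.add_apply, Finset.sum_add_distrib] using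
    HasDerivAt.fun_sum (u := Finset.univ) fun j _ => (hA i j).fun_mul (hB j k)

theorem hasDerivAt_transpose_mul_self_apply {X : ℝ → Matrix n p ℝ} {X' : Matrix n p ℝ} {t : ℝ}
    (hX : ∀ i j, HasDerivAt (fun s => X s i j) (X' i j) t) (i j : p) :
    HasDerivAt (fun s => ((X s)ᵀ * X s) i j) ((X'ᵀ * X t + (X t)ᵀ * X') i j) t :=
  hasDerivAt_mul_apply (fun i j => hX j i) hX i j

theorem hasDerivAt_transpose_mul_self_apply_of_isSymm [Fintype p] {X : ℝ → Matrix n p ℝ}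
    {G : Matrix p p ℝ} (hG : G.IsSymm) (c : ℝ) {t : ℝ}
    (hX : ∀ i j, HasDerivAt (fun s => X s i j) ((c • (X t * G)) i j) t) (i j : p) :
    HasDerivAt (fun s => ((X s)ᵀ * X s) i j)
      ((c • (G * ((X t)ᵀ * X t) + (X t)ᵀ * X t * G)) i j) t := by
  convert hasDerivAt_transpose_mul_self_apply hX i j using 3
  rw [transpose_smul, transpose_mul, hG.eq, Matrix.smul_mul, Matrix.mul_smul, smul_add,
    Matrix.mul_assoc, Matrix.mul_assoc]

end EntrywiseDerivative

theorem stmt17_general (d : ℕ)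
    (gF : Matrix (Fin d) (Fin d) ℝ → Matrix (Fin d) (Fin d) ℝ)
    (hsym : ∀ A, A.PosSemidef → (gF A).IsHermitian)
    (S : ℝ → Matrix (Fin d) (Fin d) ℝ) (X : ℝ → Matrix (Fin d) (Fin d) ℝ)
    (hX : ∀ t ≥ (0 : ℝ), ∀ i j, HasDerivAt (fun s => X s i j)
      ((-(2 : ℝ) • (X t * gF ((X t)ᵀ * X t))) i j) t)
    (hS : ∀ t ≥ (0 : ℝ), ∀ i j, HasDerivAt (fun s => S s i j)
      ((-(2 : ℝ) • (gF (S t) * S t + S t * gF (S t))) i j) t)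
    (hinit : (X 0)ᵀ * X 0 = S 0)
    (huniq : ∀ S₁ S₂ : ℝ → Matrix (Fin d) (Fin d) ℝ,
      (∀ t ≥ (0 : ℝ), ∀ i j, HasDerivAt (fun s => S₁ s i j)
        ((-(2 : ℝ) • (gF (S₁ t) * S₁ t + S₁ t * gF (S₁ t))) i j) t) →
      (∀ t ≥ (0 : ℝ), ∀ i j, HasDerivAt (fun s => S₂ s i j)
        ((-(2 : ℝ) • (gF (S₂ t) * S₂ t + S₂ t * gF (S₂ t))) i j) t) →
      S₁ 0 = S₂ 0 → ∀ t ≥ (0 : ℝ), S₁ t = S₂ t) :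
    ∀ t ≥ (0 : ℝ), (X t)ᵀ * X t = S t := by
  refine huniq (fun s => (X s)ᵀ * X s) S (fun t ht => ?_) hS hinit
  have hpsd : ((X t)ᵀ * X t).PosSemidef := by
    simpa only [conjTranspose_eq_transpose_of_trivial] using
      posSemidef_conjTranspose_mul_self (X t)
  exact hasDerivAt_transpose_mul_self_apply_of_isSymm
    (isHermitian_iff_isSymm.mp (hsym _ hpsd)) _ (hX t ht)

/-- lifting the Bures–Wasserstein gradient flow Σ' = −2(∇F(Σ)Σ + Σ∇F(Σ))
to the Euclidean flow X' = −2X∇F(XᵀX): if the covariance ODE has unique solutions,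
then XᵀX = Σ for all times. -/
theorem stmt17 (d : ℕ)
    (gF : Matrix (Fin d) (Fin d) ℝ → Matrix (Fin d) (Fin d) ℝ)
    (hsym : ∀ A, A.PosSemidef → (gF A).IsHermitian)
    (S : ℝ → Matrix (Fin d) (Fin d) ℝ) (X : ℝ → Matrix (Fin d) (Fin d) ℝ)
    (hSpsd : ∀ t ≥ (0 : ℝ), (S t).PosSemidef)
    (hX : ∀ t ≥ (0 : ℝ), ∀ i j, HasDerivAt (fun s => X s i j)
      ((-(2 : ℝ) • (X t * gF ((X t)ᵀ * X t))) i j) t)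
    (hS : ∀ t ≥ (0 : ℝ), ∀ i j, HasDerivAt (fun s => S s i j)
      ((-(2 : ℝ) • (gF (S t) * S t + S t * gF (S t))) i j) t)
    (hinit : (X 0)ᵀ * X 0 = S 0)
    (huniq : ∀ S₁ S₂ : ℝ → Matrix (Fin d) (Fin d) ℝ,
      (∀ t ≥ (0 : ℝ), ∀ i j, HasDerivAt (fun s => S₁ s i j)
        ((-(2 : ℝ) • (gF (S₁ t) * S₁ t + S₁ t * gF (S₁ t))) i j) t) →
      (∀ t ≥ (0 : ℝ), ∀ i j, HasDerivAt (fun s => S₂ s i j)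
        ((-(2 : ℝ) • (gF (S₂ t) * S₂ t + S₂ t * gF (S₂ t))) i j) t) →
      S₁ 0 = S₂ 0 → ∀ t ≥ (0 : ℝ), S₁ t = S₂ t) :
    ∀ t ≥ (0 : ℝ), (X t)ᵀ * X t = S t :=
  stmt17_general d gF hsym S X hX hS hinit huniq
end
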